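/- Let σ₁ and σ₂ be schemas such that Table(σ₁) ~ Table(σ₂) (i.e., for every shared column c, σ₁(c) and σ₂(c) are comparable under column subtyping). Define the intersection schema σ on dom(σ₁) ∪ dom(σ₂) by σ(c) = the ≤-smaller of σ₁(c) and σ₂(c) for shared columns c, and σ(c) = σᵢ(c) for columns belonging only to σᵢ. Then Table(σ) is the greatest lower bound of Table(σ₁) and Table(σ₂) with respect to table subtyping: Table(σ) <: Table(σ₁), Table(σ) <: Table(σ₂), and every table type Table(σ') with Table(σ') <: Table(σ₁) and Table(σ') <: Table(σ₂) satisfies Table(σ') <: Table(σ). -/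
import Mathlib


/-- Column types in the refinement type system. -/
inductive ColTy where
  | top | quantitative | qualitative | discrete | continuous
  | nominal | ordinal | temporal
deriving DecidableEq

/-- The subtyping axioms on column types. -/
inductive ColSubAx : ColTy → ColTy → Prop where
  | quant_top : ColSubAx .quantitative .top
  | qual_top  : ColSubAx .qualitative .top
  | disc_quant : ColSubAx .discrete .quantitative
  | cont_quant : ColSubAx .continuous .quantitative
  | nom_qual  : ColSubAx .nominal .qualitative
  | ord_qual  : ColSubAx .ordinal .qualitative
  | temp_qual : ColSubAx .temporal .qualitative

/-- Column subtyping: the reflexive-transitive closure of the axioms. -/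
def ColSub : ColTy → ColTy → Prop := Relation.ReflTransGen ColSubAx

/-- Two column types are compatible iff one is a subtype of the other. -/
def ColCompat (β₁ β₂ : ColTy) : Prop := ColSub β₁ β₂ ∨ ColSub β₂ β₁

/-- A schema is a finite partial map from column names to column types. -/
abbrev Schema := Finmap (fun _ : String => ColTy)

/-- Table subtyping (a table type `Table σ` is determined by its schema `σ`;
    since `Finmap` is quotiented by permutation, the permutation rule is implicit). -/
inductive TableSub : Schema → Schema → Prop where
  | width (σ₁ σ₂ : Schema) :
      (∀ c τ, σ₂.lookup c = some τ → σ₁.lookup c = some τ) → TableSub σ₁ σ₂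
  | depth (σ₁ σ₂ : Schema) :
      σ₁.keys = σ₂.keys →
      (∀ c τ₁ τ₂, σ₁.lookup c = some τ₁ → σ₂.lookup c = some τ₂ → ColSub τ₁ τ₂) →
      TableSub σ₁ σ₂
  | trans {σ₁ σ₂ σ₃ : Schema} : TableSub σ₁ σ₂ → TableSub σ₂ σ₃ → TableSub σ₁ σ₃

/-- Table compatibility: every shared column's types are compatible. -/
def TableCompat (σ₁ σ₂ : Schema) : Prop :=
  ∀ c τ₁ τ₂, σ₁.lookup c = some τ₁ → σ₂.lookup c = some τ₂ → ColCompat τ₁ τ₂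

/- ## Auxiliary development -/

/-- Boolean characterization of column subtyping. -/
def colLe : ColTy → ColTy → Bool
  | a, b =>
    a = b || b = .top ||
    ((a = .discrete || a = .continuous) && b = .quantitative) ||
    ((a = .nominal || a = .ordinal || a = .temporal) && b = .qualitative)

lemma colLe_refl (a : ColTy) : colLe a a = true := by cases a <;> rfl

lemma colSub_iff_colLe {a b : ColTy} : ColSub a b ↔ colLe a b = true := by
  constructor
  · intro h
    induction h with
    | refl => exact colLe_refl a
    | tail _ hax ih => cases hax <;> (revert ih; cases a <;> simp_all [colLe])
  · intro h
    cases a <;> cases b <;> simp only [colLe] at h <;>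
      first
      | exact Relation.ReflTransGen.refl
      | exact Relation.ReflTransGen.single (by constructor)
      | exact Relation.ReflTransGen.tail (Relation.ReflTransGen.single (by constructor))
          (by constructor)
      | simp at h

lemma colSub_trans {a b c : ColTy} (h₁ : ColSub a b) (h₂ : ColSub b c) : ColSub a c :=
  Relation.ReflTransGen.trans h₁ h₂

/-- Build a schema from a finite key set and a value function. -/
noncomputable def mkSchema (s : Finset String) (g : String → ColTy) : Schema :=
  Finmap.keysLookupEquiv.symm ⟨(s, fun c => if c ∈ s then some (g c) else none), by
    intro i; by_cases h : i ∈ s <;> simp [h]⟩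

lemma mkSchema_lookup (s : Finset String) (g : String → ColTy) (c : String) :
    (mkSchema s g).lookup c = if c ∈ s then some (g c) else none := by
  simp [mkSchema]

lemma mkSchema_keys (s : Finset String) (g : String → ColTy) :
    (mkSchema s g).keys = s := by
  simp [mkSchema]

/-- Semantic characterization of table subtyping. -/
def Sem (σa σb : Schema) : Prop :=
  ∀ c τ, σb.lookup c = some τ → ∃ τ', σa.lookup c = some τ' ∧ ColSub τ' τ

lemma sem_of_tableSub {σa σb : Schema} (h : TableSub σa σb) : Sem σa σb := by
  induction h with
  | width _ _ h => exact fun c τ hc => ⟨τ, h c τ hc, Relation.ReflTransGen.refl⟩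
  | depth σ₁ σ₂ hk h =>
      intro c τ hc
      have hm : c ∈ σ₁ := by
        rw [← Finmap.mem_keys, hk, Finmap.mem_keys]
        exact Finmap.mem_of_lookup_eq_some hc
      obtain ⟨τ', hτ'⟩ := Finmap.mem_iff.1 hm
      exact ⟨τ', hτ', h c τ' τ hτ' hc⟩
  | trans _ _ ih₁ ih₂ =>
      intro c τ hc
      obtain ⟨τ', h', hs'⟩ := ih₂ c τ hc
      obtain ⟨τ'', h'', hs''⟩ := ih₁ c τ' h'
      exact ⟨τ'', h'', colSub_trans hs'' hs'⟩

lemma tableSub_of_sem {σa σb : Schema} (h : Sem σa σb) : TableSub σa σb := by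
  classical
  set σm : Schema := mkSchema σb.keys (fun c => ((σa.lookup c).getD .top)) with hσm
  have hmlk : ∀ c, σm.lookup c = if c ∈ σb.keys then some ((σa.lookup c).getD .top) else none :=
    fun c => mkSchema_lookup _ _ c
  refine TableSub.trans (σ₂ := σm) (TableSub.width _ _ ?_) (TableSub.depth _ _ ?_ ?_)
  · intro c τ hc
    rw [hmlk c] at hc
    split at hc
    · rename_i hmem
      rw [Finmap.mem_keys, Finmap.mem_iff] at hmem
      obtain ⟨τb, hτb⟩ := hmem
      obtain ⟨τ', hτ', _⟩ := h c τb hτb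
      rw [hτ'] at hc ⊢
      simpa using hc
    · exact absurd hc (by simp)
  · exact mkSchema_keys _ _
  · intro c τ₁ τ₂ h₁ h₂
    obtain ⟨τ', hτ', hs⟩ := h c τ₂ h₂
    rw [hmlk c] at h₁
    split at h₁
    · rw [hτ'] at h₁; simp at h₁; subst h₁; exact hs
    · exact absurd h₁ (by simp)

/-- For compatible table types, the intersection schema (union of domains, taking the
    ≤-smaller column type on shared columns) is a greatest lower bound w.r.t. table
    subtyping. -/
theorem intersection_schema_isGLB (σ₁ σ₂ : Schema) (hcompat : TableCompat σ₁ σ₂) :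
    ∃ σ : Schema,
      -- σ is the intersection schema:
      (∀ c τ₁ τ₂, σ₁.lookup c = some τ₁ → σ₂.lookup c = some τ₂ →
        ((ColSub τ₁ τ₂ ∧ σ.lookup c = some τ₁) ∨ (ColSub τ₂ τ₁ ∧ σ.lookup c = some τ₂))) ∧
      (∀ c τ₁, σ₁.lookup c = some τ₁ → σ₂.lookup c = none → σ.lookup c = some τ₁) ∧
      (∀ c τ₂, σ₁.lookup c = none → σ₂.lookup c = some τ₂ → σ.lookup c = some τ₂) ∧
      (∀ c, σ₁.lookup c = none → σ₂.lookup c = none → σ.lookup c = none) ∧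
      -- Table(σ) is a greatest lower bound of Table(σ₁) and Table(σ₂):
      TableSub σ σ₁ ∧ TableSub σ σ₂ ∧
      (∀ σ' : Schema, TableSub σ' σ₁ → TableSub σ' σ₂ → TableSub σ' σ) := by
  classical
  -- value function: picks the smaller type where both defined
  set g : String → ColTy := fun c =>
    match σ₁.lookup c, σ₂.lookup c with
    | some a, some b => if colLe a b then a else b
    | some a, none => a
    | none, some b => b
    | none, none => .top with hg
  set σ : Schema := mkSchema (σ₁.keys ∪ σ₂.keys) g with hσ
  have hmem : ∀ c, c ∈ σ₁.keys ∪ σ₂.keys ↔ (σ₁.lookup c ≠ none ∨ σ₂.lookup c ≠ none) := by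
    intro c
    simp only [Finset.mem_union, Finmap.mem_keys, ne_eq, Finmap.lookup_eq_none, not_not]
  have hlk : ∀ c, σ.lookup c = if c ∈ σ₁.keys ∪ σ₂.keys then some (g c) else none :=
    fun c => mkSchema_lookup _ _ c
  -- key lookup facts
  have hboth : ∀ c τ₁ τ₂, σ₁.lookup c = some τ₁ → σ₂.lookup c = some τ₂ →
      σ.lookup c = some (if colLe τ₁ τ₂ then τ₁ else τ₂) := by
    intro c τ₁ τ₂ h₁ h₂
    rw [hlk c, if_pos ((hmem c).2 (.inl (by simp [h₁])))]
    simp [hg, h₁, h₂]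
  have honly₁ : ∀ c τ₁, σ₁.lookup c = some τ₁ → σ₂.lookup c = none → σ.lookup c = some τ₁ := by
    intro c τ₁ h₁ h₂
    rw [hlk c, if_pos ((hmem c).2 (.inl (by simp [h₁])))]
    simp [hg, h₁, h₂]
  have honly₂ : ∀ c τ₂, σ₁.lookup c = none → σ₂.lookup c = some τ₂ → σ.lookup c = some τ₂ := by
    intro c τ₂ h₁ h₂
    rw [hlk c, if_pos ((hmem c).2 (.inr (by simp [h₂])))]
    simp [hg, h₁, h₂]
  have hnone : ∀ c, σ₁.lookup c = none → σ₂.lookup c = none → σ.lookup c = none := by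
    intro c h₁ h₂
    rw [hlk c, if_neg]
    intro hm
    rcases (hmem c).1 hm with h | h <;> simp_all
  have hpick : ∀ c τ₁ τ₂, σ₁.lookup c = some τ₁ → σ₂.lookup c = some τ₂ →
      ((ColSub τ₁ τ₂ ∧ σ.lookup c = some τ₁) ∨ (ColSub τ₂ τ₁ ∧ σ.lookup c = some τ₂)) := by
    intro c τ₁ τ₂ h₁ h₂
    have hc := hboth c τ₁ τ₂ h₁ h₂
    by_cases hle : colLe τ₁ τ₂
    · exact .inl ⟨colSub_iff_colLe.2 hle, by rwa [if_pos hle] at hc⟩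
    · refine .inr ⟨?_, by rwa [if_neg hle] at hc⟩
      rcases hcompat c τ₁ τ₂ h₁ h₂ with h | h
      · exact absurd (colSub_iff_colLe.1 h) hle
      · exact h
  refine ⟨σ, hpick, honly₁, honly₂, hnone, ?_, ?_, ?_⟩
  · -- σ <: σ₁
    refine tableSub_of_sem (fun c τ hc => ?_)
    cases h₂ : σ₂.lookup c with
    | none => exact ⟨τ, honly₁ c τ hc h₂, Relation.ReflTransGen.refl⟩
    | some b =>
        rcases hpick c τ b hc h₂ with ⟨hs, hl⟩ | ⟨hs, hl⟩
        · exact ⟨τ, hl, Relation.ReflTransGen.refl⟩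
        · exact ⟨b, hl, hs⟩
  · -- σ <: σ₂
    refine tableSub_of_sem (fun c τ hc => ?_)
    cases h₁ : σ₁.lookup c with
    | none => exact ⟨τ, honly₂ c τ h₁ hc, Relation.ReflTransGen.refl⟩
    | some a =>
        rcases hpick c a τ h₁ hc with ⟨hs, hl⟩ | ⟨hs, hl⟩
        · exact ⟨a, hl, hs⟩
        · exact ⟨τ, hl, Relation.ReflTransGen.refl⟩
  · -- GLB
    intro σ' hs₁ hs₂
    have hsem₁ := sem_of_tableSub hs₁
    have hsem₂ := sem_of_tableSub hs₂
    refine tableSub_of_sem (fun c τ hc => ?_)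
    cases h₁ : σ₁.lookup c with
    | none =>
        cases h₂ : σ₂.lookup c with
        | none => rw [hnone c h₁ h₂] at hc; exact absurd hc (by simp)
        | some b =>
            rw [honly₂ c b h₁ h₂] at hc
            obtain rfl := Option.some.inj hc
            exact hsem₂ c b h₂
    | some a =>
        cases h₂ : σ₂.lookup c with
        | none =>
            rw [honly₁ c a h₁ h₂] at hc
            obtain rfl := Option.some.inj hc
            exact hsem₁ c a h₁
        | some b =>
            obtain ⟨τ', hl', hsa⟩ := hsem₁ c a h₁
            obtain ⟨τ'', hl'', hsb⟩ := hsem₂ c b h₂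
            rw [hl'] at hl''
            obtain rfl : τ' = τ'' := by simpa using hl''
            rcases hpick c a b h₁ h₂ with ⟨_, hl⟩ | ⟨_, hl⟩ <;> rw [hl] at hc <;>
                obtain rfl := Option.some.inj hc
            · exact ⟨τ', hl', hsa⟩
            · exact ⟨τ', hl', hsb⟩
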